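/- arXiv:1507.02990 — 4 statements merged into one kernel-verified Lean document; each statement's English description precedes it below -/
import Mathlib

section
/- Let d ≥ 2, let 1 ≤ γ_1 ≤ … ≤ γ_{d-1} ≤ β be positive integers, and let p, n be positive integers with gcd(p,n) = 1 and n even. Then ∏_{k=1}^{βn-1} ( d − e^{2πi p k/(βn)} − ∑_{m=1}^{d-1} e^{2πi (γ_m n + p) k/(βn)} ) = n d^{βn−1} · ( 1 − δ_{β even} · (−1)^p d^{−n} (1 + ∑_{m=1}^{d-1} (−1)^{γ_m})^n ) · ∏_{k=1}^{⌈β/2⌉−1} ( 1 − 2 |1 − μ_k/d|^n cos( 2πpk/β + n·arctan( (∑_{m=1}^{d-1} sin(2πγ_m k/β)) / (d − η_k/2) ) ) + |1 − μ_k/d|^{2n} ), where when d − η_k/2 = 0 the arctan term is interpreted as its limit sgn(∑_{m=1}^{d-1} sin(2πγ_m k/β))·π/2. (By the matrix tree theorem this product equals the number of spanning trees in the directed circulant graph on βn vertices with generators p, γ_1 n + p, …, γ_{d-1} n + p.) -/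
/-
Index `k = j + β t` with `0 ≤ j < β`, `0 ≤ t < n`. The `k`-th factor is `d - ω^{pk} (d - μ_k)`
with `ω = e^{2πi/(βn)}`. Since `μ` is `β`-periodic and `ω^{pβt} = ζ^t` for the primitive `n`-th
root of unity `ζ = e^{2πip/n}` (this is where `gcd(p,n) = 1` enters), the `n` factors of the
block `j` multiply to `d^n - (ω^{pj}(d - μ_j))^n = d^n (1 - e^{2πipj/β} (1 - μ_j/d)^n)`; the
block `j = 0`, which misses `k = 0`, gives `d^{n-1} ∏_{t=1}^{n-1} (1 - ζ^t) = n d^{n-1}`.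
The blocks `j` and `β - j` are complex conjugate, so each pair contributes
`|1 - r^n e^{iα}|² = 1 - 2 r^n cos α + r^{2n}`, where `1 - μ_j/d = ±r e^{iψ}` with `ψ` the
arctan phase: the sign is invisible because `n` is even. For even `β` the self-conjugate block
`j = β/2` gives the middle factor.
-/

open Finset Real

/-- `μ_k = d − 1 − ∑_{m=1}^{d-1} e^{2πiγ_m k/β}`, the nonzero Laplacian eigenvalues of the
directed circulant graph on `β` vertices with generators `γ_1, …, γ_{d-1}`. -/
noncomputable def dirEig (d β : ℕ) (γ : ℕ → ℕ) (k : ℕ) : ℂ :=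
  (d : ℂ) - 1 - ∑ m ∈ Finset.Icc 1 (d - 1), Complex.exp (2 * Real.pi * Complex.I * (γ m) * k / β)

/-- `η_k = 2(d−1) − 2∑_{m=1}^{d-1} cos(2πγ_m k/β)`, the nonzero Laplacian eigenvalues of the
undirected circulant graph on `β` vertices with generators `γ_1, …, γ_{d-1}`. -/
noncomputable def undirEig (d β : ℕ) (γ : ℕ → ℕ) (k : ℕ) : ℝ :=
  2 * ((d : ℝ) - 1) - 2 * ∑ m ∈ Finset.Icc 1 (d - 1), Real.cos (2 * Real.pi * (γ m) * k / β)

/-- The phase `arctan((∑_{m=1}^{d-1} sin(2πγ_m k/β))/(d − η_k/2))`, interpreted, when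
`d − η_k/2 = 0`, as its limit `sgn(∑_{m=1}^{d-1} sin(2πγ_m k/β))·π/2`. -/
noncomputable def eigPhase (d β : ℕ) (γ : ℕ → ℕ) (k : ℕ) : ℝ :=
  if (d : ℝ) - undirEig d β γ k / 2 = 0 then
    Real.sign (∑ m ∈ Finset.Icc 1 (d - 1), Real.sin (2 * Real.pi * (γ m) * k / β)) * Real.pi / 2
  else
    Real.arctan ((∑ m ∈ Finset.Icc 1 (d - 1), Real.sin (2 * Real.pi * (γ m) * k / β))
      / ((d : ℝ) - undirEig d β γ k / 2))

namespace Finset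

variable {M : Type*} [CommMonoid M]

theorem prod_range_mul_eq_prod_prod (f : ℕ → M) (β n : ℕ) :
    ∏ k ∈ range (β * n), f k = ∏ j ∈ range β, ∏ t ∈ range n, f (j + β * t) := by
  induction n with
  | zero => simp
  | succ n ih =>
    rw [Nat.mul_succ, prod_range_add, ih]
    simp only [prod_range_succ, prod_mul_distrib, add_comm]

theorem prod_Ico_one_mul_eq (f : ℕ → M) {β : ℕ} (hβ : 0 < β) (n : ℕ) :
    ∏ k ∈ Ico 1 (β * n), f k
      = (∏ t ∈ Ico 1 n, f (β * t))
        * ∏ j ∈ Ico 1 β, ∏ t ∈ range n, f (j + β * t) := by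
  rcases n.eq_zero_or_pos with rfl | hn
  · simp
  -- the block decomposition covers all of `range (β * n)`, so neutralize the factor at `0`
  set g := Function.update f 0 1
  have hg : ∀ k ∈ Ico 1 (β * n), g k = f k := fun k hk =>
    Function.update_of_ne (by simp at hk; omega) _ _
  have hg' : ∀ j ∈ Ico 1 β, ∀ t, g (j + β * t) = f (j + β * t) := fun j hj t =>
    Function.update_of_ne (by simp at hj; omega) _ _
  have hg'' : ∀ t ∈ Ico 1 n, g (β * t) = f (β * t) := fun t ht =>
    Function.update_of_ne (Nat.mul_ne_zero hβ.ne' (by simp at ht; omega)) _ _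
  have h := prod_range_mul_eq_prod_prod g β n
  rw [prod_range_eq_mul_Ico _ (by positivity), prod_range_eq_mul_Ico _ hβ,
    prod_range_eq_mul_Ico _ hn] at h
  simpa [g, prod_congr rfl hg, prod_congr rfl hg'', prod_congr rfl fun j hj =>
    prod_congr rfl fun t _ => hg' j hj t] using h

theorem prod_Ico_one_eq_mul_prod_pairs (f : ℕ → M) {β : ℕ} (hβ : 0 < β) :
    ∏ j ∈ Ico 1 β, f j
      = (if Even β then f (β / 2) else 1) * ∏ j ∈ Ico 1 ((β + 1) / 2), f j * f (β - j) := by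
  rw [prod_mul_distrib]
  obtain ⟨c, rfl | rfl⟩ := Nat.even_or_odd' β
  · rw [if_pos (even_two_mul c), show (2 * c + 1) / 2 = c by omega, show 2 * c / 2 = c by omega,
      prod_Ico_reflect f 1 (by omega), ← prod_Ico_consecutive f (show 1 ≤ c by omega)
        (show c ≤ 2 * c by omega), prod_eq_prod_Ico_succ_bot (show c < 2 * c by omega)]
    rw [show 2 * c + 1 - c = c + 1 by omega, show 2 * c + 1 - 1 = 2 * c by omega, mul_left_comm]
  · rw [if_neg (Nat.not_even_two_mul_add_one c), show (2 * c + 1 + 1) / 2 = c + 1 by omega,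
      prod_Ico_reflect f 1 (by omega), ← prod_Ico_consecutive f (show 1 ≤ c + 1 by omega)
        (show c + 1 ≤ 2 * c + 1 by omega)]
    rw [show 2 * c + 1 + 1 - (c + 1) = c + 1 by omega, show 2 * c + 1 + 1 - 1 = 2 * c + 1 by omega,
      one_mul]

end Finset

namespace IsPrimitiveRoot

variable {R : Type*} [CommRing R] [IsDomain R] {ζ : R} {n : ℕ}

theorem prod_range_sub_pow_mul (hζ : IsPrimitiveRoot ζ n) (hn : 0 < n) (x c : R) :
    ∏ t ∈ range n, (x - ζ ^ t * c) = x ^ n - c ^ n := by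
  simpa [Polynomial.eval_prod] using
    (congrArg (Polynomial.eval x) (X_pow_sub_C_eq_prod hζ hn rfl)).symm

theorem prod_Ico_one_sub_pow (hζ : IsPrimitiveRoot ζ n) (hn : 0 < n) :
    ∏ t ∈ Ico 1 n, (1 - ζ ^ t) = n := by
  obtain ⟨m, rfl⟩ := Nat.exists_eq_add_of_lt hn
  rw [prod_Ico_eq_prod_range, show 0 + m + 1 - 1 = m by omega]
  simpa [add_comm] using prod_one_sub_pow_eq_order (by simpa using hζ)

end IsPrimitiveRoot

-- The arctan phase of `x + y i`; it differs from `Complex.arg` by `π` when `x < 0`.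
noncomputable def phase (x y : ℝ) : ℝ :=
  if x = 0 then Real.sign y * π / 2 else arctan (y / x)

theorem eigPhase_eq_phase (d β : ℕ) (γ : ℕ → ℕ) (k : ℕ) :
    eigPhase d β γ k
      = phase (d - undirEig d β γ k / 2)
          (∑ m ∈ Icc 1 (d - 1), Real.sin (2 * π * γ m * k / β)) :=
  rfl

theorem exists_ofReal_mul_exp_phase (x y : ℝ) :
    ∃ ρ : ℝ, (x + y * Complex.I : ℂ) = ρ * Complex.exp (phase x y * Complex.I) := by
  by_cases hx : x = 0
  · refine ⟨|y|, ?_⟩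
    rw [phase, if_pos hx, hx, Complex.exp_mul_I]
    rcases lt_trichotomy y 0 with hy | rfl | hy
    · rw [Real.sign_of_neg hy, abs_of_neg hy]
      push_cast
      rw [show -1 * (π : ℂ) / 2 = -(π / 2) by ring, Complex.cos_neg, Complex.sin_neg,
        Complex.cos_pi_div_two, Complex.sin_pi_div_two]
      ring
    · simp
    · rw [Real.sign_of_pos hy, abs_of_pos hy]
      push_cast
      rw [one_mul, Complex.cos_pi_div_two, Complex.sin_pi_div_two]
      ring
  -- `exp (i arctan t) = (1 + i t) / √(1 + t²)`
  · refine ⟨x * √(1 + (y / x) ^ 2), ?_⟩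
    have hs : (√(1 + (y / x) ^ 2) : ℂ) ≠ 0 := Complex.ofReal_ne_zero.mpr (by positivity)
    have hx' : (x : ℂ) ≠ 0 := Complex.ofReal_ne_zero.mpr hx
    rw [phase, if_neg hx, Complex.exp_mul_I, ← Complex.ofReal_cos, ← Complex.ofReal_sin,
      Real.cos_arctan, Real.sin_arctan]
    push_cast
    generalize (√(1 + (y / x) ^ 2) : ℂ) = s at hs ⊢
    field_simp

theorem ofReal_add_mul_I_pow_of_even (x y : ℝ) {n : ℕ} (hn : Even n) :
    (x + y * Complex.I : ℂ) ^ n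
      = ‖(x + y * Complex.I : ℂ)‖ ^ n * Complex.exp (n * phase x y * Complex.I) := by
  obtain ⟨ρ, hρ⟩ := exists_ofReal_mul_exp_phase x y
  rw [hρ, norm_mul, Complex.norm_exp_ofReal_mul_I, mul_one, Complex.norm_real, Real.norm_eq_abs,
    mul_pow, ← Complex.exp_nat_mul, ← Complex.ofReal_pow, ← Complex.ofReal_pow, hn.pow_abs,
    mul_assoc]

theorem one_sub_mul_exp_mul_conj (r α : ℝ) :
    (1 - r * Complex.exp (α * Complex.I))
        * starRingEnd ℂ (1 - r * Complex.exp (α * Complex.I))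
      = ((1 - 2 * r * Real.cos α + r ^ 2 : ℝ) : ℂ) := by
  rw [Complex.mul_conj, Complex.normSq_apply]
  simp only [Complex.sub_re, Complex.sub_im, Complex.one_re, Complex.one_im, Complex.re_ofReal_mul,
    Complex.im_ofReal_mul, Complex.exp_ofReal_mul_I_re, Complex.exp_ofReal_mul_I_im]
  push_cast
  linear_combination (r : ℂ) ^ 2 * Complex.sin_sq_add_cos_sq (α : ℂ)

section CircleRoots

variable {β : ℕ}

theorem exp_two_pi_I_mul_add_mul_div (hβ : β ≠ 0) (a j t : ℕ) :
    Complex.exp (2 * π * Complex.I * a * ((j + β * t : ℕ) : ℂ) / β)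
      = Complex.exp (2 * π * Complex.I * a * j / β) := by
  have hβ' : (β : ℂ) ≠ 0 := Nat.cast_ne_zero.mpr hβ
  rw [show 2 * π * Complex.I * a * ((j + β * t : ℕ) : ℂ) / β
      = 2 * π * Complex.I * a * j / β + (a * t : ℕ) * (2 * π * Complex.I) by
    push_cast; field_simp, Complex.exp_add, Complex.exp_nat_mul_two_pi_mul_I, mul_one]

theorem exp_two_pi_I_mul_sub_div (hβ : β ≠ 0) {j : ℕ} (hj : j ≤ β) (a : ℕ) :
    Complex.exp (2 * π * Complex.I * a * ((β - j : ℕ) : ℂ) / β)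
      = starRingEnd ℂ (Complex.exp (2 * π * Complex.I * a * j / β)) := by
  have hβ' : (β : ℂ) ≠ 0 := Nat.cast_ne_zero.mpr hβ
  rw [← Complex.exp_conj, show 2 * π * Complex.I * a * ((β - j : ℕ) : ℂ) / β
      = starRingEnd ℂ (2 * π * Complex.I * a * j / β) + a * (2 * π * Complex.I) by
    simp only [map_div₀, map_mul, map_ofNat, Complex.conj_I, Complex.conj_ofReal,
      Complex.conj_natCast, Nat.cast_sub hj]
    field_simp; ring, Complex.exp_add, Complex.exp_nat_mul_two_pi_mul_I, mul_one]

theorem exp_two_pi_I_mul_half_div (hβ : β ≠ 0) (hβe : Even β) (a : ℕ) :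
    Complex.exp (2 * π * Complex.I * a * ((β / 2 : ℕ) : ℂ) / β) = (-1) ^ a := by
  obtain ⟨c, rfl⟩ := hβe
  have hc : (c : ℂ) ≠ 0 := Nat.cast_ne_zero.mpr (by omega)
  rw [show (c + c) / 2 = c by omega, ← Complex.exp_pi_mul_I, ← Complex.exp_nat_mul]
  congr 1
  push_cast
  field_simp
  ring

theorem isPrimitiveRoot_exp_two_pi_I_mul_div {p n : ℕ} (hn : n ≠ 0) (hpn : Nat.gcd p n = 1) :
    IsPrimitiveRoot (Complex.exp (2 * π * Complex.I * p / n)) n := by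
  simpa only [mul_div_assoc] using Complex.isPrimitiveRoot_exp_of_coprime p n hn hpn

end CircleRoots

section Circulant

variable (d β : ℕ) (γ : ℕ → ℕ)

theorem natCast_sub_dirEig (k : ℕ) :
    (d : ℂ) - dirEig d β γ k
      = 1 + ∑ m ∈ Icc 1 (d - 1), Complex.exp (2 * π * Complex.I * γ m * k / β) := by
  rw [dirEig]; ring

theorem natCast_sub_dirEig_eq_ofReal (k : ℕ) :
    (d : ℂ) - dirEig d β γ k
      = ((d - undirEig d β γ k / 2 : ℝ) : ℂ)
        + ((∑ m ∈ Icc 1 (d - 1), Real.sin (2 * π * γ m * k / β) : ℝ) : ℂ)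
          * Complex.I := by
  have hterm : ∀ m, Complex.exp (2 * π * Complex.I * γ m * k / β)
      = Real.cos (2 * π * γ m * k / β) + Real.sin (2 * π * γ m * k / β) * Complex.I := by
    intro m
    rw [show 2 * π * Complex.I * γ m * k / β
        = ((2 * π * γ m * k / β : ℝ) : ℂ) * Complex.I by push_cast; ring,
      Complex.exp_mul_I, ← Complex.ofReal_cos, ← Complex.ofReal_sin]
  simp only [natCast_sub_dirEig, undirEig, hterm, sum_add_distrib, ← sum_mul]
  push_cast
  ring

variable {d β}

theorem dirEig_zero (hd : 1 ≤ d) : dirEig d β γ 0 = 0 := by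
  simp [dirEig, Nat.cast_sub hd]

theorem dirEig_add_mul (hβ : β ≠ 0) (j t : ℕ) :
    dirEig d β γ (j + β * t) = dirEig d β γ j := by
  simp only [dirEig, exp_two_pi_I_mul_add_mul_div hβ]

theorem dirEig_sub (hβ : β ≠ 0) {j : ℕ} (hj : j ≤ β) :
    dirEig d β γ (β - j) = starRingEnd ℂ (dirEig d β γ j) := by
  simp [dirEig, exp_two_pi_I_mul_sub_div hβ hj]

theorem natCast_sub_dirEig_half (hβ : β ≠ 0) (hβe : Even β) :
    (d : ℂ) - dirEig d β γ (β / 2) = 1 + ∑ m ∈ Icc 1 (d - 1), (-1 : ℂ) ^ γ m := by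
  simp only [natCast_sub_dirEig, exp_two_pi_I_mul_half_div hβ hβe]

end Circulant

-- the nonzero Laplacian eigenvalues of the directed circulant graph on `βn` vertices with
-- generators `p, γ_1 n + p, …, γ_{d-1} n + p`
noncomputable def liftedDirEig (d β p n : ℕ) (γ : ℕ → ℕ) (k : ℕ) : ℂ :=
  (d : ℂ) - Complex.exp (2 * π * Complex.I * p * k / (β * n))
    - ∑ m ∈ Icc 1 (d - 1), Complex.exp (2 * π * Complex.I * (γ m * n + p) * k / (β * n))

noncomputable def blockFactor (d β p n : ℕ) (γ : ℕ → ℕ) (j : ℕ) : ℂ :=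
  1 - Complex.exp (2 * π * Complex.I * p * j / β) * (1 - dirEig d β γ j / d) ^ n

section Lift

variable {d β p n : ℕ} (γ : ℕ → ℕ)

theorem liftedDirEig_eq (hβ : β ≠ 0) (hn : n ≠ 0) (k : ℕ) :
    liftedDirEig d β p n γ k
      = d - Complex.exp (2 * π * Complex.I * p * k / (β * n)) * (d - dirEig d β γ k) := by
  have hβ' : (β : ℂ) ≠ 0 := Nat.cast_ne_zero.mpr hβ
  have hn' : (n : ℂ) ≠ 0 := Nat.cast_ne_zero.mpr hn
  have hsplit : ∀ m, Complex.exp (2 * π * Complex.I * (γ m * n + p) * k / (β * n))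
      = Complex.exp (2 * π * Complex.I * p * k / (β * n))
        * Complex.exp (2 * π * Complex.I * γ m * k / β) := fun m => by
    rw [← Complex.exp_add]; congr 1; field_simp; ring
  rw [liftedDirEig, natCast_sub_dirEig]
  simp only [hsplit, ← mul_sum]
  ring

theorem liftedDirEig_add_mul (hβ : β ≠ 0) (hn : n ≠ 0) (j t : ℕ) :
    liftedDirEig d β p n γ (j + β * t)
      = d - Complex.exp (2 * π * Complex.I * p / n) ^ t
          * (Complex.exp (2 * π * Complex.I * p * j / (β * n)) * (d - dirEig d β γ j)) := by
  have hβ' : (β : ℂ) ≠ 0 := Nat.cast_ne_zero.mpr hβ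
  have hn' : (n : ℂ) ≠ 0 := Nat.cast_ne_zero.mpr hn
  rw [liftedDirEig_eq γ hβ hn, dirEig_add_mul γ hβ, ← Complex.exp_nat_mul, ← mul_assoc,
    ← Complex.exp_add]
  congr 4
  push_cast
  field_simp
  ring

theorem prod_range_liftedDirEig_add_mul (hβ : β ≠ 0) (hn : n ≠ 0) (hpn : Nat.gcd p n = 1)
    (hd : d ≠ 0) (j : ℕ) :
    ∏ t ∈ range n, liftedDirEig d β p n γ (j + β * t)
      = d ^ n * blockFactor d β p n γ j := by
  have hd' : (d : ℂ) ≠ 0 := Nat.cast_ne_zero.mpr hd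
  have hβ' : (β : ℂ) ≠ 0 := Nat.cast_ne_zero.mpr hβ
  have hn' : (n : ℂ) ≠ 0 := Nat.cast_ne_zero.mpr hn
  simp only [liftedDirEig_add_mul γ hβ hn]
  rw [(isPrimitiveRoot_exp_two_pi_I_mul_div hn hpn).prod_range_sub_pow_mul (Nat.pos_of_ne_zero hn),
    blockFactor, mul_pow, ← Complex.exp_nat_mul, one_sub_div hd', div_pow]
  rw [show (n : ℂ) * (2 * π * Complex.I * p * j / (β * n)) = 2 * π * Complex.I * p * j / β by
    field_simp]
  field_simp

theorem prod_Ico_liftedDirEig_mul (hβ : β ≠ 0) (hn : n ≠ 0) (hpn : Nat.gcd p n = 1)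
    (hd : 1 ≤ d) :
    ∏ t ∈ Ico 1 n, liftedDirEig d β p n γ (β * t) = d ^ (n - 1) * n := by
  have hζ := isPrimitiveRoot_exp_two_pi_I_mul_div hn hpn
  have hblock : ∀ t, liftedDirEig d β p n γ (β * t)
      = d * (1 - Complex.exp (2 * π * Complex.I * p / n) ^ t) := fun t => by
    simpa [dirEig_zero γ hd, mul_sub, mul_comm] using
      liftedDirEig_add_mul (d := d) (p := p) γ hβ hn 0 t
  rw [prod_congr rfl fun t _ => hblock t, prod_mul_distrib, prod_const, Nat.card_Ico,
    hζ.prod_Ico_one_sub_pow (Nat.pos_of_ne_zero hn)]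

end Lift

section BlockFactor

variable {d β : ℕ} (p n : ℕ) (γ : ℕ → ℕ)

theorem blockFactor_sub (hβ : β ≠ 0) {j : ℕ} (hj : j ≤ β) :
    blockFactor d β p n γ (β - j) = starRingEnd ℂ (blockFactor d β p n γ j) := by
  simp [blockFactor, dirEig_sub γ hβ hj, exp_two_pi_I_mul_sub_div hβ hj]

theorem blockFactor_half (hβ : β ≠ 0) (hβe : Even β) (hd : d ≠ 0) :
    blockFactor d β p n γ (β / 2)
      = 1 - (-1) ^ p / (d : ℂ) ^ n * (1 + ∑ m ∈ Icc 1 (d - 1), (-1 : ℂ) ^ γ m) ^ n := by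
  rw [blockFactor, exp_two_pi_I_mul_half_div hβ hβe, one_sub_div (Nat.cast_ne_zero.mpr hd),
    natCast_sub_dirEig_half γ hβ hβe, div_pow]
  ring

theorem blockFactor_eq_one_sub_mul_exp (hn : Even n) (hd : d ≠ 0) (j : ℕ) :
    blockFactor d β p n γ j
      = 1 - (‖1 - dirEig d β γ j / d‖ ^ n : ℝ)
          * Complex.exp ((2 * π * p * j / β + n * eigPhase d β γ j : ℝ) * Complex.I) := by
  rw [blockFactor, one_sub_div (Nat.cast_ne_zero.mpr hd), natCast_sub_dirEig_eq_ofReal, div_pow,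
    ofReal_add_mul_I_pow_of_even _ _ hn, norm_div, Complex.norm_natCast, div_pow, eigPhase_eq_phase]
  generalize phase _ _ = φ
  generalize ‖(_ : ℂ)‖ = r
  push_cast
  rw [add_mul, Complex.exp_add,
    show 2 * π * p * j / β * Complex.I = 2 * π * Complex.I * p * j / β by ring]
  ring

theorem blockFactor_mul_blockFactor_sub (hβ : β ≠ 0) (hn : Even n) (hd : d ≠ 0) {j : ℕ}
    (hj : j ≤ β) :
    blockFactor d β p n γ j * blockFactor d β p n γ (β - j)
      = ((1 - 2 * ‖1 - dirEig d β γ j / d‖ ^ n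
            * Real.cos (2 * π * p * j / β + n * eigPhase d β γ j)
          + ‖1 - dirEig d β γ j / d‖ ^ (2 * n) : ℝ) : ℂ) := by
  rw [blockFactor_sub p n γ hβ hj, blockFactor_eq_one_sub_mul_exp p n γ hn hd,
    one_sub_mul_exp_mul_conj, pow_mul', mul_assoc]

end BlockFactor

theorem stmt_0_general (d β p n : ℕ) (γ : ℕ → ℕ) (hd : 2 ≤ d)
    (hβ : 1 ≤ β) (hn : 1 ≤ n) (hpn : Nat.gcd p n = 1) (hne : Even n) :
    ∏ k ∈ Finset.Icc 1 (β * n - 1),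
        ((d : ℂ) - Complex.exp (2 * Real.pi * Complex.I * p * k / (β * n))
          - ∑ m ∈ Finset.Icc 1 (d - 1),
              Complex.exp (2 * Real.pi * Complex.I * (γ m * n + p) * k / (β * n)))
      = (n : ℂ) * (d : ℂ) ^ (β * n - 1)
        * (1 - (if Even β then (1 : ℂ) else 0) * (-1) ^ p / (d : ℂ) ^ n
            * (1 + ∑ m ∈ Finset.Icc 1 (d - 1), (-1 : ℂ) ^ (γ m)) ^ n)
        * ∏ k ∈ Finset.Icc 1 ((β + 1) / 2 - 1),
            (((1 : ℝ)
                - 2 * ‖1 - dirEig d β γ k / d‖ ^ n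
                    * Real.cos (2 * Real.pi * p * k / β + n * eigPhase d β γ k)
                + ‖1 - dirEig d β γ k / d‖ ^ (2 * n) : ℝ) : ℂ) := by
  have hβ0 : β ≠ 0 := by omega
  have hn0 : n ≠ 0 := by omega
  have hd0 : d ≠ 0 := by omega
  have hIcc : ∀ N, Icc 1 (N - 1) = Ico 1 N := fun N => by ext; simp; omega
  change ∏ k ∈ Icc 1 (β * n - 1), liftedDirEig d β p n γ k = _
  rw [hIcc (β * n), hIcc ((β + 1) / 2), prod_Ico_one_mul_eq _ (by omega),
    prod_Ico_liftedDirEig_mul γ hβ0 hn0 hpn (by omega),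
    prod_congr rfl fun j _ => prod_range_liftedDirEig_add_mul γ hβ0 hn0 hpn hd0 j,
    prod_mul_distrib, prod_const, Nat.card_Ico, prod_Ico_one_eq_mul_prod_pairs _ (by omega),
    prod_congr rfl fun j hj => blockFactor_mul_blockFactor_sub p n γ hβ0 hne hd0
      (show j ≤ β by simp at hj; omega)]
  have hmid : (if Even β then blockFactor d β p n γ (β / 2) else 1)
      = 1 - (if Even β then (1 : ℂ) else 0) * (-1) ^ p / (d : ℂ) ^ n
          * (1 + ∑ m ∈ Icc 1 (d - 1), (-1 : ℂ) ^ γ m) ^ n := by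
    split_ifs with hβe
    · rw [blockFactor_half p n γ hβ0 hβe hd0, one_mul]
    · simp
  have hpow : (d : ℂ) ^ (n - 1) * ((d : ℂ) ^ n) ^ (β - 1) = (d : ℂ) ^ (β * n - 1) := by
    rw [← pow_mul, ← pow_add]
    congr 1
    have : β * n = n * (β - 1) + n := by
      rw [mul_comm, ← Nat.mul_succ, Nat.succ_eq_add_one, Nat.sub_add_cancel hβ]
    omega
  rw [hmid, ← hpow]
  ring

/-- The number of spanning trees of the directed circulant graph on `βn` vertices with
generators `p, γ_1 n + p, …, γ_{d-1} n + p`, for `gcd(p,n) = 1` and even `n`, as a product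
of `⌈β/2⌉ − 1` explicit factors. -/
theorem stmt_0 (d β p n : ℕ) (γ : ℕ → ℕ) (hd : 2 ≤ d)
    (hγ1 : ∀ m ∈ Finset.Icc 1 (d - 1), 1 ≤ γ m)
    (hγmono : ∀ m ∈ Finset.Icc 1 (d - 1), ∀ m' ∈ Finset.Icc 1 (d - 1), m ≤ m' → γ m ≤ γ m')
    (hγβ : ∀ m ∈ Finset.Icc 1 (d - 1), γ m ≤ β)
    (hβ : 1 ≤ β) (hp : 1 ≤ p) (hn : 1 ≤ n) (hpn : Nat.gcd p n = 1) (hne : Even n) :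
    ∏ k ∈ Finset.Icc 1 (β * n - 1),
        ((d : ℂ) - Complex.exp (2 * Real.pi * Complex.I * p * k / (β * n))
          - ∑ m ∈ Finset.Icc 1 (d - 1),
              Complex.exp (2 * Real.pi * Complex.I * (γ m * n + p) * k / (β * n)))
      = (n : ℂ) * (d : ℂ) ^ (β * n - 1)
        * (1 - (if Even β then (1 : ℂ) else 0) * (-1) ^ p / (d : ℂ) ^ n
            * (1 + ∑ m ∈ Finset.Icc 1 (d - 1), (-1 : ℂ) ^ (γ m)) ^ n)
        * ∏ k ∈ Finset.Icc 1 ((β + 1) / 2 - 1),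
            (((1 : ℝ)
                - 2 * ‖1 - dirEig d β γ k / d‖ ^ n
                    * Real.cos (2 * Real.pi * p * k / β + n * eigPhase d β γ k)
                + ‖1 - dirEig d β γ k / d‖ ^ (2 * n) : ℝ) : ℂ) :=
  stmt_0_general d β p n γ hd hβ hn hpn hne
end

section
/- Let n ≥ 1 be an integer. Then (1/(2n)) ∏_{k=1}^{2n−1} ( 2n − 2∑_{m=1}^{n} cos(2πkm/(2n)) ) = (2n)^{2n−2} (1 + 1/n)^n. (By the matrix tree theorem the left-hand side is the number of spanning trees in the n-th power graph of the 2n-cycle.) -/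
/-! With `x = πk/(2n)`, telescoping `2 sin x cos 2mx = sin (2m+1)x - sin (2m-1)x` gives
`∑_{m=1}^n cos 2mx = (sin (2n+1)x / sin x - 1) / 2`, and `sin ((2n+1)x) = sin (x + kπ) = (-1)^k sin x`.
So the eigenvalue is `2n` for even `k` and `2n + 2` for odd `k`, and the product over
`k = 1, …, 2n-1` is `(2n)^(n-1) (2n+2)^n`. -/

open Finset Real

theorem two_mul_sin_mul_sum_Icc_cos (x : ℝ) (n : ℕ) :
    2 * sin x * ∑ m ∈ Icc 1 n, cos (2 * m * x) = sin ((2 * n + 1) * x) - sin x := by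
  induction n with
  | zero => simp
  | succ n ih =>
    rw [sum_Icc_succ_top (by omega), mul_add, ih]
    have h₁ : (2 * ((n + 1 : ℕ) : ℝ) + 1) * x = 2 * ((n + 1 : ℕ) : ℝ) * x + x := by ring
    have h₂ : (2 * (n : ℝ) + 1) * x = 2 * ((n + 1 : ℕ) : ℝ) * x - x := by push_cast; ring
    rw [h₁, h₂, sin_add, sin_sub]
    ring

theorem sum_Icc_cos_pi_mul_div {n k : ℕ} (hk₀ : 0 < k) (hk : k < 2 * n) :
    ∑ m ∈ Icc 1 n, cos (2 * π * k * m / (2 * n)) = if Even k then 0 else -1 := by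
  set x := π * k / (2 * n)
  have hn₀ : (0 : ℝ) < n := by exact_mod_cast (show 0 < n by omega)
  have hsin : sin x ≠ 0 := by
    refine (sin_pos_of_pos_of_lt_pi (by positivity) ?_).ne'
    rw [div_lt_iff₀ (by positivity)]
    have : (k : ℝ) < 2 * n := by exact_mod_cast hk
    nlinarith [pi_pos]
  have hsum := two_mul_sin_mul_sum_Icc_cos x n
  have hend : (2 * n + 1) * x = x + k * π := by simp only [x]; field_simp; ring
  rw [hend, sin_add_nat_mul_pi] at hsum
  have harg : ∀ m : ℕ, 2 * π * k * m / (2 * n) = 2 * m * x := fun m => by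
    simp only [x]; field_simp
  simp_rw [harg]
  apply mul_left_cancel₀ (mul_ne_zero two_ne_zero hsin)
  rcases Nat.even_or_odd k with he | ho
  · rw [he.neg_one_pow] at hsum
    rw [if_pos he]
    linarith
  · rw [ho.neg_one_pow] at hsum
    rw [if_neg (Nat.not_even_iff_odd.mpr ho)]
    linarith

theorem prod_Icc_ite_even {M : Type*} [CommMonoid M] (a b : M) (N : ℕ) :
    ∏ k ∈ Icc 1 (2 * N + 1), (if Even k then a else b) = a ^ N * b ^ (N + 1) := by
  induction N with
  | zero => simp
  | succ N ih =>
    rw [show 2 * (N + 1) + 1 = 2 * N + 1 + 1 + 1 by ring, prod_Icc_succ_top (by omega),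
      prod_Icc_succ_top (by omega), ih]
    have he : Even (2 * N + 1 + 1) := ⟨N + 1, by ring⟩
    rw [if_pos he, if_neg (Nat.not_even_iff_odd.mpr he.add_one), pow_succ a, pow_succ b (N + 1)]
    ac_rfl

/-- The number of spanning trees in the `n`-th power graph of the `2n`-cycle:
`(1/(2n)) ∏_{k=1}^{2n−1} (2n − 2∑_{m=1}^{n} cos(2πkm/(2n))) = (2n)^{2n−2} (1 + 1/n)^n`. -/
theorem stmt_7 (n : ℕ) (hn : 1 ≤ n) :
    (1 / (2 * (n : ℝ))) * ∏ k ∈ Finset.Icc 1 (2 * n - 1),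
        (2 * (n : ℝ) - 2 * ∑ m ∈ Finset.Icc 1 n, Real.cos (2 * Real.pi * k * m / (2 * n)))
      = (2 * (n : ℝ)) ^ (2 * n - 2) * (1 + 1 / (n : ℝ)) ^ n := by
  obtain ⟨p, rfl⟩ : ∃ p, n = p + 1 := ⟨n - 1, by omega⟩
  have heigen : ∀ k ∈ Icc 1 (2 * (p + 1) - 1),
      2 * ((p + 1 : ℕ) : ℝ) - 2 * ∑ m ∈ Icc 1 (p + 1), cos (2 * π * k * m / (2 * (p + 1 : ℕ)))
        = if Even k then 2 * ((p + 1 : ℕ) : ℝ) else 2 * ((p + 1 : ℕ) : ℝ) + 2 := by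
    intro k hk
    rw [mem_Icc] at hk
    rw [sum_Icc_cos_pi_mul_div (by omega) (by omega)]
    split_ifs <;> ring
  rw [prod_congr rfl heigen, show 2 * (p + 1) - 1 = 2 * p + 1 by omega, prod_Icc_ite_even,
    show 2 * (p + 1) - 2 = 2 * p by omega]
  generalize hN : ((p + 1 : ℕ) : ℝ) = N
  have hN₀ : N ≠ 0 := by rw [← hN]; positivity
  rw [show 2 * N + 2 = 2 * N * (1 + 1 / N) by field_simp, mul_pow (2 * N)]
  generalize 1 + 1 / N = c
  field_simp
  ring
end

section
/- Let n ≥ 2 be an integer. Then (1/(2n)) ∏_{k=1}^{2n−1} ( 2(n−1) − 2∑_{m=1}^{n−1} cos(2πkm/(2n)) ) = (2n)^{2n−2} (1 − 1/n)^n. (By the matrix tree theorem the left-hand side is the number of spanning trees in the (n−1)-th power graph of the 2n-cycle.) -/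
open Finset Real

private lemma geom_cos (n k : ℕ) (hn : 0 < n) (hk1 : 0 < k) (hk2 : k < 2*n) :
    ∑ m ∈ range (2*n), Real.cos (2 * Real.pi * k * m / (2 * n)) = 0 := by
  have hθ : ∀ m : ℕ, (2 * Real.pi * k * m / (2 * n)) = m * (Real.pi * k / n) := by
    intro m; field_simp
  set θ : ℝ := Real.pi * k / n with hθdef
  have key : ∑ m ∈ range (2*n), Real.cos (m * θ) = 0 := by
    have hz : Complex.exp (θ * Complex.I) ≠ 1 := by
      intro h
      rw [Complex.exp_eq_one_iff] at h
      obtain ⟨j, hj⟩ := h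
      have : (θ : ℂ) * Complex.I = (j * (2*Real.pi)) * Complex.I := by
        rw [hj]; ring
      have h2 : (θ : ℝ) = j * (2*Real.pi) := by
        have := mul_right_cancel₀ Complex.I_ne_zero this
        exact_mod_cast this
      have hπ := Real.pi_pos
      have hθpos : 0 < θ := by
        apply div_pos (by positivity) (by positivity)
      have hθlt : θ < 2 * Real.pi := by
        rw [hθdef, div_lt_iff₀ (by positivity)]
        calc Real.pi * k < Real.pi * (2*n) := by
              apply mul_lt_mul_of_pos_left _ hπ; exact_mod_cast hk2
          _ = 2 * Real.pi * n := by ring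
      have hjpos : 0 < j := by
        by_contra h
        push_neg at h
        have : (j:ℝ) ≤ 0 := by exact_mod_cast h
        nlinarith
      have : (1:ℤ) ≤ j := hjpos
      have : (1:ℝ) ≤ j := by exact_mod_cast this
      nlinarith
    have geo : ∑ m ∈ range (2*n), Complex.exp (θ * Complex.I) ^ m = 0 := by
      rw [geom_sum_eq hz]
      have : Complex.exp (θ * Complex.I) ^ (2*n) = 1 := by
        rw [← Complex.exp_nat_mul]
        push_cast
        have : (2*(n:ℂ)) * ((θ:ℂ) * Complex.I) = k * (2 * Real.pi * Complex.I) := by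
          rw [hθdef]
          have : (n:ℂ) ≠ 0 := by exact_mod_cast hn.ne'
          push_cast
          field_simp
        rw [this, Complex.exp_nat_mul_two_pi_mul_I]
      rw [this]; simp
    have : ∑ m ∈ range (2*n), Real.cos (m * θ) =
        (∑ m ∈ range (2*n), Complex.exp (θ * Complex.I) ^ m).re := by
      rw [Complex.re_sum]
      apply Finset.sum_congr rfl
      intro m _
      rw [← Complex.exp_nat_mul]
      have : (m:ℂ) * (θ * Complex.I) = ((m * θ : ℝ) : ℂ) * Complex.I := by push_cast; ring
      rw [this, Complex.exp_ofReal_mul_I_re]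
    rw [this, geo]; simp
  calc ∑ m ∈ range (2*n), Real.cos (2 * Real.pi * k * m / (2 * n))
      = ∑ m ∈ range (2*n), Real.cos (m * θ) := by
        apply Finset.sum_congr rfl; intro m _; rw [hθ]
    _ = 0 := key

private lemma half_cos_sum (n k : ℕ) (hn : 2 ≤ n) (hk1 : 1 ≤ k) (hk2 : k ≤ 2*n - 1) :
    ∑ m ∈ Finset.Icc 1 (n - 1), Real.cos (2 * Real.pi * k * m / (2 * n))
      = -(1 + (-1:ℝ)^k) / 2 := by
  have hn0 : 0 < n := by omega
  set c : ℕ → ℝ := fun m => Real.cos (2 * Real.pi * k * m / (2 * n)) with hc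
  have total : ∑ m ∈ range (2*n), c m = 0 := geom_cos n k hn0 (by omega) (by omega)
  have hr : range (2*n) = insert 0 (Finset.Icc 1 (2*n-1)) := by
    ext x; simp [Finset.mem_range, Finset.mem_Icc]; omega
  have hsplit : Finset.Icc 1 (2*n-1) =
      (Finset.Icc 1 (n-1)) ∪ insert n (Finset.Icc (n+1) (2*n-1)) := by
    ext x; simp [Finset.mem_Icc, Finset.mem_union, Finset.mem_insert]; omega
  have hdisj : Disjoint (Finset.Icc 1 (n-1)) (insert n (Finset.Icc (n+1) (2*n-1))) := by
    rw [Finset.disjoint_left]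
    intro x hx hx'
    simp [Finset.mem_Icc, Finset.mem_insert] at hx hx'
    omega
  have hnotmem : n ∉ Finset.Icc (n+1) (2*n-1) := by simp
  have hrefl : ∑ m ∈ Finset.Icc (n+1) (2*n-1), c m = ∑ m ∈ Finset.Icc 1 (n-1), c m := by
    apply Finset.sum_nbij' (i := fun m => 2*n - m) (j := fun m => 2*n - m)
    · intro a ha; simp [Finset.mem_Icc] at ha ⊢; omega
    · intro a ha; simp [Finset.mem_Icc] at ha ⊢; omega
    · intro a ha; simp [Finset.mem_Icc] at ha; omega
    · intro a ha; simp [Finset.mem_Icc] at ha; omega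
    · intro a ha
      simp only [Finset.mem_Icc] at ha
      show c a = c (2*n - a)
      have hcast : ((2*n - a : ℕ) : ℝ) = 2*n - a := by
        have : a ≤ 2*n := by omega
        push_cast [this]; ring
      simp only [hc]
      rw [hcast]
      have harg : 2 * Real.pi * k * (2*(n:ℝ) - a) / (2 * n) =
          k * (2 * Real.pi) - 2 * Real.pi * k * a / (2 * n) := by
        have : (n:ℝ) ≠ 0 := by positivity
        field_simp
      rw [harg, Real.cos_nat_mul_two_pi_sub]
  have hc0 : c 0 = 1 := by simp [hc]
  have hcn : c n = (-1:ℝ)^k := by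
    simp only [hc]
    have : 2 * Real.pi * k * n / (2 * n) = k * Real.pi - 0 := by
      have : (n:ℝ) ≠ 0 := by positivity
      field_simp; ring
    rw [this, Real.cos_nat_mul_pi_sub]
    simp
  rw [hr, Finset.sum_insert (by simp), hsplit, Finset.sum_union hdisj,
    Finset.sum_insert hnotmem, hrefl, hc0, hcn] at total
  linarith

private lemma prod_alt (N : ℕ) (hN : 1 ≤ N) (a : ℝ) :
    ∏ k ∈ Finset.Icc 1 (2*N - 1), (a + (-1:ℝ)^k) = (a - 1)^N * (a + 1)^(N - 1) := by
  induction N with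
  | zero => omega
  | succ M ih =>
    rcases Nat.eq_or_lt_of_le hN with h1 | h1
    · simp [← h1]; ring
    · have hM : 1 ≤ M := by omega
      obtain ⟨j, rfl⟩ : ∃ j, M = j + 1 := ⟨M - 1, by omega⟩
      have e1 : 2*(j+1+1) - 1 = (2*(j+1)) + 1 := by omega
      have e2 : (2*(j+1) - 1) + 1 = 2*(j+1) := by omega
      rw [e1, Finset.prod_Icc_succ_top (by omega), ← e2,
        Finset.prod_Icc_succ_top (by omega), e2, ih hM]
      have h2M : (-1:ℝ)^(2*(j+1)) = 1 := by
        rw [pow_mul]; norm_num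
      have h2M1 : (-1:ℝ)^(2*(j+1)+1) = -1 := by
        rw [pow_succ, h2M]; norm_num
      rw [h2M, h2M1]
      simp only [Nat.add_sub_cancel]
      rw [pow_succ (a-1), pow_succ (a-1), pow_succ (a+1)]
      ring

/-- The number of spanning trees in the `(n−1)`-th power graph of the `2n`-cycle:
`(1/(2n)) ∏_{k=1}^{2n−1} (2(n−1) − 2∑_{m=1}^{n−1} cos(2πkm/(2n))) = (2n)^{2n−2} (1 − 1/n)^n`. -/
theorem stmt_9 (n : ℕ) (hn : 2 ≤ n) :
    (1 / (2 * (n : ℝ))) * ∏ k ∈ Finset.Icc 1 (2 * n - 1),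
        (2 * ((n : ℝ) - 1) - 2 * ∑ m ∈ Finset.Icc 1 (n - 1), Real.cos (2 * Real.pi * k * m / (2 * n)))
      = (2 * (n : ℝ)) ^ (2 * n - 2) * (1 - 1 / (n : ℝ)) ^ n := by
  have hprod : ∏ k ∈ Finset.Icc 1 (2 * n - 1),
      (2 * ((n : ℝ) - 1) - 2 * ∑ m ∈ Finset.Icc 1 (n - 1),
        Real.cos (2 * Real.pi * k * m / (2 * n)))
      = ∏ k ∈ Finset.Icc 1 (2*n - 1), ((2*(n:ℝ) - 1) + (-1:ℝ)^k) := by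
    apply Finset.prod_congr rfl
    intro k hk
    simp only [Finset.mem_Icc] at hk
    rw [half_cos_sum n k hn hk.1 hk.2]
    ring
  rw [hprod, prod_alt n (by omega) (2*(n:ℝ) - 1)]
  obtain ⟨m, rfl⟩ : ∃ m, n = m + 2 := ⟨n - 2, by omega⟩
  have e1 : m + 2 - 1 = m + 1 := by omega
  have e2 : 2*(m+2) - 2 = 2*m + 2 := by omega
  rw [e1, e2]
  set N : ℝ := ((m+2 : ℕ) : ℝ) with hN
  have hN2 : (2:ℝ) ≤ N := by rw [hN]; exact_mod_cast (by omega : 2 ≤ m + 2)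
  have hNpos : (0:ℝ) < N := by linarith
  have f1 : (2*N - 1 - 1) = 2*(N-1) := by ring
  have f2 : (2*N - 1 + 1) = 2*N := by ring
  have f3 : (1 - 1/N) = (N-1)/N := by field_simp
  rw [f1, f2, f3, mul_pow, mul_pow, div_pow, mul_pow]
  have hNne : N ≠ 0 := ne_of_gt hNpos
  field_simp
  ring
end

section
/- Let n ≥ 1 be an integer and ω a real number. Then ∏_{l=0}^{n−1} sin(ω + πl/n) = sin(nω)/2^{n−1}. -/
open Finset Real

open Complex in
lemma sin_exp_form (t : ℂ) :
    Complex.sin t = Complex.exp (-t*I) * (1 - Complex.exp (2*t*I)) * (I / 2) := by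
  have h : Complex.exp (-t*I) * Complex.exp (2*t*I) = Complex.exp (t*I) := by
    rw [← Complex.exp_add]; ring_nf
  rw [Complex.sin]
  linear_combination (I/2) * h

open Complex in
lemma root_prod (m : ℕ) (z : ℂ) :
    ∏ l ∈ Finset.range (m+1), (1 - Complex.exp (2*Real.pi*I/(m+1)) ^ l * z) = 1 - z^(m+1) := by
  have hζ : IsPrimitiveRoot (Complex.exp (2*Real.pi*I/(m+1))) (m+1) := by
    have := Complex.isPrimitiveRoot_exp (m+1) (Nat.succ_ne_zero m)
    convert this using 2
    push_cast; ring
  have hp := X_pow_sub_C_eq_prod hζ (Nat.succ_pos m) (rfl : z^(m+1) = z^(m+1))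
  apply_fun Polynomial.eval 1 at hp
  rw [Polynomial.eval_prod] at hp
  simpa using hp.symm

open Complex in
lemma key_sin_prod (m : ℕ) (w : ℂ) :
    ∏ l ∈ Finset.range (m+1), Complex.sin (w + Real.pi * l / (m+1))
      = Complex.sin ((m+1) * w) / 2 ^ m := by
  have hm1 : ((m:ℂ) + 1) ≠ 0 := Nat.cast_add_one_ne_zero m
  have hfac : ∀ l ∈ Finset.range (m+1),
      Complex.sin (w + Real.pi * l / (m+1))
        = Complex.exp (-(w + Real.pi * l / (m+1))*I)
          * (1 - Complex.exp (2*Real.pi*I/(m+1)) ^ l * Complex.exp (2*w*I)) * (I / 2) := by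
    intro l _
    rw [sin_exp_form]
    congr 2
    rw [← Complex.exp_nat_mul, ← Complex.exp_add]
    congr 1
    field_simp
    ring
  rw [Finset.prod_congr rfl hfac]
  rw [Finset.prod_mul_distrib, Finset.prod_mul_distrib, Finset.prod_const, Finset.card_range,
    root_prod, ← Complex.exp_sum]
  have hsum : (∑ l ∈ Finset.range (m+1), (-(w + Real.pi * l / (m+1))*I))
      = -((m+1)*w)*I + -(Real.pi * m / 2)*I := by
    have hg : (∑ l ∈ Finset.range (m+1), (l:ℂ)) = (m+1) * m / 2 := by
      have h2 : ((∑ l ∈ Finset.range (m+1), (l:ℕ) : ℕ) : ℂ) * 2 = ((m+1) * m : ℕ) := by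
        exact_mod_cast congrArg (Nat.cast : ℕ → ℂ) (Finset.sum_range_id_mul_two (m+1))
      push_cast at h2
      linear_combination h2 / 2
    have ht : ∀ l ∈ Finset.range (m+1),
        -(w + Real.pi * l / (m+1))*I = -w*I + (-(Real.pi*I/(m+1))) * (l:ℂ) := by
      intro l _; field_simp; ring
    rw [Finset.sum_congr rfl ht, Finset.sum_add_distrib, Finset.sum_const, Finset.card_range,
      ← Finset.mul_sum, hg]
    field_simp
    ring
  rw [hsum, Complex.exp_add]
  have hexp : Complex.exp (-(Real.pi * (m:ℂ) / 2)*I) = (-I)^m := by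
    have hI : (-I : ℂ) = Complex.exp (-(Real.pi/2)*I) := by
      rw [Complex.exp_mul_I]; simp
    rw [hI, ← Complex.exp_nat_mul]
    congr 1
    ring
  have hz : Complex.exp (2*w*I) ^ (m+1) = Complex.exp (2*((m+1)*w)*I) := by
    rw [← Complex.exp_nat_mul]
    congr 1
    push_cast; ring
  rw [hexp, hz, sin_exp_form ((m+1 : ℂ)*w)]
  have hc : ((-I:ℂ))^m * (I/2)^(m+1) = (I/2)/2^m := by
    rw [pow_succ, ← mul_assoc, ← mul_pow]
    have h1 : (-I) * (I/2) = 1/2 := by linear_combination (-(1:ℂ)/2) * Complex.I_mul_I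
    rw [h1, div_pow, one_pow]
    ring
  linear_combination Complex.exp (-(((m:ℂ)+1)*w)*I) * (1 - Complex.exp (2*(((m:ℂ)+1)*w)*I)) * hc

/-- `∏_{l=0}^{n−1} sin(ω + πl/n) = sin(nω)/2^{n−1}`. -/
theorem stmt_15 (n : ℕ) (hn : 1 ≤ n) (ω : ℝ) :
    ∏ l ∈ Finset.range n, Real.sin (ω + Real.pi * l / n)
      = Real.sin (n * ω) / 2 ^ (n - 1) := by
  obtain ⟨m, rfl⟩ := Nat.exists_eq_add_of_le hn
  simp only [Nat.add_sub_cancel_left] at *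
  have h := key_sin_prod m (ω : ℂ)
  have hgoal : ((∏ l ∈ Finset.range (1+m), Real.sin (ω + Real.pi * l / (1+m)) : ℝ) : ℂ)
      = ((Real.sin ((1+m) * ω) / 2 ^ m : ℝ) : ℂ) := by
    push_cast
    rw [add_comm 1 m, add_comm (1:ℂ) (m:ℂ)]
    exact_mod_cast h
  exact_mod_cast hgoal
end
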